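/- For the 4×4 matrix H⁽⁴⁾(a,0) with diagonal (2-ia, 2-ia, 2+ia, 2+ia) and off-diagonal entries -1, the eigenvalues are 2 ± (1/2)·√(6 - 4a² ± 2√(5 - 16a²)), and all four eigenvalues are real if and only if |a| ≤ √5/4. -/

import Mathlib

open Matrix Complex

/-!
The characteristic polynomial of `H4z0 a` is `u² + (2a² - 3) u + (a⁴ + a² + 1)` in `u = (z - 2)²`,
a real quadratic of discriminant `5 - 16a²`; the quadratic formula gives the four eigenvalues.
If `16a² ≤ 5` both roots `u` are real, and they are positive since the quadratic equals
`(u + a²)² - 3u + a² + 1`, so every `z - 2 = ±√u` is real. If `16a² > 5` the quadratic has no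
real root, so an eigenvalue, which exists over `ℂ`, cannot be real.
-/

/-- H⁽⁴⁾(a,0): tridiagonal with diagonal (2-ia, 2-ia, 2+ia, 2+ia), off-diagonal -1. -/
noncomputable def H4z0 (a : ℝ) : Matrix (Fin 4) (Fin 4) ℂ :=
  !![2 - a * Complex.I, -1, 0, 0;
     -1, 2 - a * Complex.I, -1, 0;
     0, -1, 2 + a * Complex.I, -1;
     0, 0, -1, 2 + a * Complex.I]

theorem Complex.exists_ofReal_eq_of_quadratic_eq_zero {a b c : ℝ} (ha : a ≠ 0)
    (hd : 0 ≤ discrim a b c) {x : ℂ} (hx : a * (x * x) + b * x + c = 0) :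
    ∃ r : ℝ, (r : ℂ) = x := by
  have hs : discrim (a : ℂ) b c = √(discrim a b c) * √(discrim a b c) := by
    rw [← ofReal_mul, Real.mul_self_sqrt hd]
    simp [discrim]
  rcases (quadratic_eq_zero_iff (ofReal_ne_zero.2 ha) hs x).1 hx with rfl | rfl
  · exact ⟨(-b + √(discrim a b c)) / (2 * a), by push_cast; rfl⟩
  · exact ⟨(-b - √(discrim a b c)) / (2 * a), by push_cast; rfl⟩

theorem Complex.im_eq_zero_of_sq_eq_ofReal {w : ℂ} {r : ℝ} (hr : 0 ≤ r) (hw : w ^ 2 = r) :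
    w.im = 0 := by
  have hre : w.re ^ 2 - w.im ^ 2 = r := by simpa [sq] using congrArg re hw
  have him : w.re * w.im + w.im * w.re = 0 := by simpa [sq] using congrArg im hw
  rcases mul_eq_zero.1 (show w.re * w.im = 0 by linarith) with h | h
  · rw [h] at hre
    nlinarith
  · exact h

theorem det_smul_one_sub_H4z0 (a : ℝ) (z : ℂ) :
    (z • (1 : Matrix (Fin 4) (Fin 4) ℂ) - H4z0 a).det
      = 1 * ((z - 2) ^ 2 * (z - 2) ^ 2) + ((2 * a ^ 2 - 3 : ℝ) : ℂ) * (z - 2) ^ 2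
        + ((a ^ 4 + a ^ 2 + 1 : ℝ) : ℂ) := by
  simp [det_succ_row_zero, Fin.sum_univ_succ, H4z0, Matrix.smul_apply, one_apply,
    Matrix.sub_apply, Fin.succAbove]
  ring_nf
  simp only [I_sq]
  push_cast
  ring

theorem mem_spectrum_H4z0_iff {a : ℝ} {z : ℂ} :
    z ∈ spectrum ℂ (H4z0 a) ↔
      1 * ((z - 2) ^ 2 * (z - 2) ^ 2) + ((2 * a ^ 2 - 3 : ℝ) : ℂ) * (z - 2) ^ 2
        + ((a ^ 4 + a ^ 2 + 1 : ℝ) : ℂ) = 0 := by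
  rw [spectrum.mem_iff, isUnit_iff_isUnit_det, isUnit_iff_ne_zero, not_ne_iff,
    Algebra.algebraMap_eq_smul_one, det_smul_one_sub_H4z0]

theorem ofReal_two_add_mem_spectrum_H4z0 {a x : ℝ}
    (hx : 1 * (x ^ 2 * x ^ 2) + (2 * a ^ 2 - 3) * x ^ 2 + (a ^ 4 + a ^ 2 + 1) = 0) :
    ((2 + x : ℝ) : ℂ) ∈ spectrum ℂ (H4z0 a) := by
  rw [mem_spectrum_H4z0_iff, show ((2 + x : ℝ) : ℂ) - 2 = x by push_cast; ring]
  exact_mod_cast hx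

theorem discrim_H4z0 (a : ℝ) :
    discrim 1 (2 * a ^ 2 - 3) (a ^ 4 + a ^ 2 + 1) = 5 - 16 * a ^ 2 := by
  rw [discrim]
  ring

theorem H4z0_quadratic_eq_zero {a ε u : ℝ} (hε : ε = 1 ∨ ε = -1) (hd : 0 ≤ 5 - 16 * a ^ 2)
    (hu : u = (-(2 * a ^ 2 - 3) + ε * √(5 - 16 * a ^ 2)) / (2 * 1)) :
    1 * (u * u) + (2 * a ^ 2 - 3) * u + (a ^ 4 + a ^ 2 + 1) = 0 := by
  have hs : discrim 1 (2 * a ^ 2 - 3) (a ^ 4 + a ^ 2 + 1)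
      = √(5 - 16 * a ^ 2) * √(5 - 16 * a ^ 2) := by
    rw [discrim_H4z0, Real.mul_self_sqrt hd]
  rw [quadratic_eq_zero_iff one_ne_zero hs, hu]
  rcases hε with rfl | rfl
  · exact Or.inl (by ring)
  · exact Or.inr (by ring)

theorem pos_of_H4z0_quadratic_eq_zero {a u : ℝ}
    (hu : 1 * (u * u) + (2 * a ^ 2 - 3) * u + (a ^ 4 + a ^ 2 + 1) = 0) : 0 < u := by
  nlinarith [sq_nonneg (u + a ^ 2)]

theorem im_eq_zero_of_mem_spectrum_H4z0 {a : ℝ} (hd : 0 ≤ 5 - 16 * a ^ 2) {z : ℂ}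
    (hz : z ∈ spectrum ℂ (H4z0 a)) : z.im = 0 := by
  rw [← discrim_H4z0] at hd
  rw [mem_spectrum_H4z0_iff] at hz
  obtain ⟨u, hu⟩ := Complex.exists_ofReal_eq_of_quadratic_eq_zero one_ne_zero hd
    (by exact_mod_cast hz)
  rw [← hu] at hz
  have hu_pos : 0 < u := pos_of_H4z0_quadratic_eq_zero (by exact_mod_cast hz)
  simpa using Complex.im_eq_zero_of_sq_eq_ofReal hu_pos.le hu.symm

theorem five_sub_sixteen_sq_nonneg_of_ofReal_mem_spectrum_H4z0 {a r : ℝ}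
    (hr : (r : ℂ) ∈ spectrum ℂ (H4z0 a)) : 0 ≤ 5 - 16 * a ^ 2 := by
  rw [mem_spectrum_H4z0_iff, show (r : ℂ) - 2 = ((r - 2 : ℝ) : ℂ) by push_cast; rfl] at hr
  have hroot : 1 * ((r - 2) ^ 2 * (r - 2) ^ 2) + (2 * a ^ 2 - 3) * (r - 2) ^ 2
      + (a ^ 4 + a ^ 2 + 1) = 0 := by exact_mod_cast hr
  rw [← discrim_H4z0, discrim_eq_sq_of_quadratic_eq_zero hroot]
  positivity

theorem abs_le_sqrt_five_div_four_iff (a : ℝ) : |a| ≤ √5 / 4 ↔ 0 ≤ 5 - 16 * a ^ 2 := by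
  rw [le_div_iff₀ four_pos, Real.le_sqrt (by positivity) (by norm_num), mul_pow, sq_abs]
  constructor <;> intro h <;> linarith

theorem H4z0_spectrum (a : ℝ) :
    (∀ ε₁ ε₂ : ℝ, (ε₁ = 1 ∨ ε₁ = -1) → (ε₂ = 1 ∨ ε₂ = -1) →
      0 ≤ 5 - 16 * a ^ 2 →
      0 ≤ 6 - 4 * a ^ 2 + ε₂ * (2 * Real.sqrt (5 - 16 * a ^ 2)) →
      ((2 + ε₁ * ((1 : ℝ) / 2) *
          Real.sqrt (6 - 4 * a ^ 2 + ε₂ * (2 * Real.sqrt (5 - 16 * a ^ 2))) : ℝ) : ℂ)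
        ∈ spectrum ℂ (H4z0 a)) ∧
    ((∀ z ∈ spectrum ℂ (H4z0 a), z.im = 0) ↔ |a| ≤ Real.sqrt 5 / 4) := by
  refine ⟨fun ε₁ ε₂ hε₁ hε₂ hd hT ↦ ?_, ?_⟩
  · apply ofReal_two_add_mem_spectrum_H4z0
    refine H4z0_quadratic_eq_zero hε₂ hd ?_
    have hε₁ : ε₁ ^ 2 = 1 := by rcases hε₁ with rfl | rfl <;> norm_num
    rw [mul_pow, mul_pow, hε₁, Real.sq_sqrt hT]
    ring
  rw [abs_le_sqrt_five_div_four_iff]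
  refine ⟨fun hreal ↦ ?_, fun hd z hz ↦ im_eq_zero_of_mem_spectrum_H4z0 hd hz⟩
  obtain ⟨z, hz⟩ := spectrum.nonempty_of_isAlgClosed_of_finiteDimensional ℂ (H4z0 a)
  have hz_real : (z.re : ℂ) = z := Complex.ext rfl (hreal z hz).symm
  exact five_sub_sixteen_sq_nonneg_of_ofReal_mem_spectrum_H4z0 (hz_real ▸ hz)
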